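/- arXiv:2103.11489 — 3 statements merged into one kernel-verified Lean document; each statement's English description precedes it below -/
import Mathlib

section
/- Let K ≥ 1, and suppose for each x in a set D and each θ ∈ Θ, the K×K symmetric matrix A(x,θ) satisfies A(x,θ) ⪰ (1/κ) I_K for some κ > 0. Define G_t(θ_1,θ_2) = λ I_{Kd} + Σ_{s=1}^{t-1} B(x_s,θ_1,θ_2) ⊗ (x_s x_s^T) where B(x,θ_1,θ_2) = ∫_0^1 A(x, vθ_1+(1−v)θ_2) dv, and V_t = κλ I_d + Σ_{s=1}^{t-1} x_s x_s^T. Then (1/κ)(I_K ⊗ V_t) ⪯ G_t(θ_1,θ_2) for any θ_1, θ_2 ∈ Θ (Θ convex). -/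
/-!
Subtracting `κ⁻¹ (I_K ⊗ V_t)` from `G_t` cancels the ridge terms (`κ⁻¹ · κλ = λ`) and leaves
`∑ₛ (B(xₛ, θ₁, θ₂) - κ⁻¹ I_K) ⊗ xₛxₛᵀ`. Each `B - κ⁻¹ I_K` is positive semidefinite as the average
over the segment `[θ₂, θ₁] ⊆ Θ` of the positive semidefinite matrices `A - κ⁻¹ I_K`, and Kronecker
products and sums of positive semidefinite matrices are positive semidefinite.
-/

open Kronecker Matrix MeasureTheory

namespace Matrix

variable {R l m n p ι : Type*} [CommRing R]

theorem kronecker_finsetSum (A : Matrix l m R) (s : Finset ι) (X : ι → Matrix n p R) :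
    A ⊗ₖ ∑ i ∈ s, X i = ∑ i ∈ s, A ⊗ₖ X i :=
  map_sum (kroneckerBilinear (R := R) A) X s

theorem sub_kronecker (A₁ A₂ : Matrix l m R) (B : Matrix n p R) :
    (A₁ - A₂) ⊗ₖ B = A₁ ⊗ₖ B - A₂ ⊗ₖ B :=
  LinearMap.map_sub₂ (kroneckerBilinear (R := R)) A₁ A₂ B

theorem smul_one_add_sum_kronecker_sub_smul_one_kronecker [Fintype m] [Fintype n]
    [DecidableEq m] [DecidableEq n] (s : Finset ι) (B : ι → Matrix m m ℝ)
    (X : ι → Matrix n n ℝ) {c : ℝ} (hc : c ≠ 0) (l : ℝ) :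
    l • (1 : Matrix (m × n) (m × n) ℝ) + ∑ i ∈ s, B i ⊗ₖ X i
      - c⁻¹ • ((1 : Matrix m m ℝ) ⊗ₖ ((c * l) • (1 : Matrix n n ℝ) + ∑ i ∈ s, X i)) =
      ∑ i ∈ s, (B i - c⁻¹ • (1 : Matrix m m ℝ)) ⊗ₖ X i := by
  simp only [kronecker_add, kronecker_smul, one_kronecker_one, kronecker_finsetSum, sub_kronecker,
    smul_kronecker, Finset.sum_sub_distrib, smul_add, smul_smul, inv_mul_cancel_left₀ hc,
    Finset.smul_sum]
  abel

theorem posSemidef_of_intervalIntegral [Fintype n] {f : ℝ → Matrix n n ℝ} {a b : ℝ}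
    (hab : a ≤ b) (hf : ∀ i j, IntervalIntegrable (fun v => f v i j) volume a b)
    (hpsd : ∀ v ∈ Set.Icc a b, (f v).PosSemidef) :
    (of fun i j => ∫ v in a..b, f v i j).PosSemidef := by
  refine PosSemidef.of_dotProduct_mulVec_nonneg ?_ fun y => ?_
  · ext i j
    refine intervalIntegral.integral_congr fun v hv => ?_
    rw [Set.uIcc_of_le hab] at hv
    simpa using (hpsd v hv).1.apply i j
  · have hquad : star y ⬝ᵥ ((of fun i j => ∫ v in a..b, f v i j) *ᵥ y) =
        ∫ v in a..b, star y ⬝ᵥ (f v *ᵥ y) := by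
      simp only [dotProduct, mulVec, of_apply, Finset.mul_sum, star_trivial,
        ← Fintype.sum_prod_type']
      rw [intervalIntegral.integral_finsetSum fun p _ => ((hf p.1 p.2).mul_const _).const_mul _]
      simp only [intervalIntegral.integral_const_mul, intervalIntegral.integral_mul_const]
    rw [hquad]
    exact intervalIntegral.integral_nonneg hab fun v hv => (hpsd v hv).dotProduct_mulVec_nonneg y

end Matrix

theorem stmt11_general {K d t : ℕ} (lam κ : ℝ) (hκ : 0 < κ)
    (x : Fin t → Fin d → ℝ) (Θ : Set (Fin K × Fin d → ℝ)) (hΘ : Convex ℝ Θ)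
    (A : (Fin d → ℝ) → (Fin K × Fin d → ℝ) → Matrix (Fin K) (Fin K) ℝ)
    (hAlow : ∀ s θ, θ ∈ Θ →
      (A (x s) θ - κ⁻¹ • (1 : Matrix (Fin K) (Fin K) ℝ)).PosSemidef)
    (θ₁ θ₂ : Fin K × Fin d → ℝ) (h₁ : θ₁ ∈ Θ) (h₂ : θ₂ ∈ Θ)
    (hInt : ∀ s i j, IntervalIntegrable
      (fun v => A (x s) (fun p => v * θ₁ p + (1 - v) * θ₂ p) i j)
      MeasureTheory.volume 0 1)
    (B : Fin t → Matrix (Fin K) (Fin K) ℝ)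
    (hB : ∀ s i j, B s i j =
      ∫ v in (0:ℝ)..1, A (x s) (fun p => v * θ₁ p + (1 - v) * θ₂ p) i j)
    (G : Matrix (Fin K × Fin d) (Fin K × Fin d) ℝ)
    (hG : G = lam • (1 : Matrix (Fin K × Fin d) (Fin K × Fin d) ℝ) +
      ∑ s, B s ⊗ₖ Matrix.vecMulVec (x s) (x s))
    (V : Matrix (Fin d) (Fin d) ℝ)
    (hV : V = (κ * lam) • (1 : Matrix (Fin d) (Fin d) ℝ) +
      ∑ s, Matrix.vecMulVec (x s) (x s)) :
    (G - κ⁻¹ • ((1 : Matrix (Fin K) (Fin K) ℝ) ⊗ₖ V)).PosSemidef := by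
  set θv : ℝ → Fin K × Fin d → ℝ := fun v p => v * θ₁ p + (1 - v) * θ₂ p
  have hsegment : ∀ v ∈ Set.Icc (0 : ℝ) 1, θv v ∈ Θ := fun v hv =>
    hΘ h₁ h₂ hv.1 (sub_nonneg.2 hv.2) (add_sub_cancel v 1)
  have hBsub : ∀ s, B s - κ⁻¹ • (1 : Matrix (Fin K) (Fin K) ℝ) =
      of fun i j => ∫ v in (0 : ℝ)..1, (A (x s) (θv v) - κ⁻¹ • 1) i j := by
    intro s
    ext i j
    simp [hB, intervalIntegral.integral_sub (hInt s i j) intervalIntegrable_const, θv]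
  have hBpsd : ∀ s, (B s - κ⁻¹ • (1 : Matrix (Fin K) (Fin K) ℝ)).PosSemidef := fun s =>
    hBsub s ▸ posSemidef_of_intervalIntegral zero_le_one
      (fun i j => (hInt s i j).sub intervalIntegrable_const)
      (fun v hv => hAlow s _ (hsegment v hv))
  rw [hG, hV, smul_one_add_sum_kronecker_sub_smul_one_kronecker _ _ _ hκ.ne']
  exact posSemidef_sum _ fun s _ => (hBpsd s).kronecker (posSemidef_vecMulVec_self_star (x s))

theorem stmt11 {K d t : ℕ} (lam κ : ℝ) (hlam : 0 < lam) (hκ : 0 < κ)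
    (x : Fin t → Fin d → ℝ) (Θ : Set (Fin K × Fin d → ℝ)) (hΘ : Convex ℝ Θ)
    (A : (Fin d → ℝ) → (Fin K × Fin d → ℝ) → Matrix (Fin K) (Fin K) ℝ)
    (hAsym : ∀ s θ, θ ∈ Θ → (A (x s) θ).IsHermitian)
    (hAlow : ∀ s θ, θ ∈ Θ →
      (A (x s) θ - κ⁻¹ • (1 : Matrix (Fin K) (Fin K) ℝ)).PosSemidef)
    (θ₁ θ₂ : Fin K × Fin d → ℝ) (h₁ : θ₁ ∈ Θ) (h₂ : θ₂ ∈ Θ)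
    (hInt : ∀ s i j, IntervalIntegrable
      (fun v => A (x s) (fun p => v * θ₁ p + (1 - v) * θ₂ p) i j)
      MeasureTheory.volume 0 1)
    (B : Fin t → Matrix (Fin K) (Fin K) ℝ)
    (hB : ∀ s i j, B s i j =
      ∫ v in (0:ℝ)..1, A (x s) (fun p => v * θ₁ p + (1 - v) * θ₂ p) i j)
    (G : Matrix (Fin K × Fin d) (Fin K × Fin d) ℝ)
    (hG : G = lam • (1 : Matrix (Fin K × Fin d) (Fin K × Fin d) ℝ) +
      ∑ s, B s ⊗ₖ Matrix.vecMulVec (x s) (x s))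
    (V : Matrix (Fin d) (Fin d) ℝ)
    (hV : V = (κ * lam) • (1 : Matrix (Fin d) (Fin d) ℝ) +
      ∑ s, Matrix.vecMulVec (x s) (x s)) :
    (G - κ⁻¹ • ((1 : Matrix (Fin K) (Fin K) ℝ) ⊗ₖ V)).PosSemidef :=
  stmt11_general lam κ hκ x Θ hΘ A hAlow θ₁ θ₂ h₁ h₂ hInt B hB G hG V hV
end

section
/- Let 1/κ := inf over x ∈ D, θ ∈ Θ of λ_min(A(x,θ)), where A(x,θ)_{ij} = z_i(x,θ)(δ_{ij} − z_j(x,θ)) with z_i(x,θ) = exp(θ̄_i^T x)/(1 + Σ_j exp(θ̄_j^T x)), D = {x : ‖x‖ ≤ X} and Θ = {θ ∈ ℝ^{Kd} : ‖θ‖ ≤ S}. Then κ ≤ e^{SX}(1 + K e^{SX})². -/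
/-!
Each score `⟨θ_k, x⟩` lies in `[-SX, SX]` by Cauchy–Schwarz, so every class probability is at
least `e^{-SX}/(1 + K e^{SX})` and the reference probability `z₀ = 1 - ∑ z_k` is at least
`1/(1 + K e^{SX})`. For `A = diag z - z zᵀ`, the weighted Cauchy–Schwarz inequality
`(∑ z_i v_i)² ≤ (∑ z_i)(∑ z_i v_i²)` gives `vᵀ A v ≥ z₀ ∑ z_i v_i² ≥ (min_i z₀ z_i) ‖v‖²`.
-/

open Real Matrix Finset

theorem abs_sum_row_mul_le_norm_mul_norm {ι κ : Type*} [Fintype ι] [Fintype κ]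
    (θ : EuclideanSpace ℝ (ι × κ)) (x : EuclideanSpace ℝ κ) (k : ι) :
    |∑ l, θ (k, l) * x l| ≤ ‖θ‖ * ‖x‖ := by
  have hrow : ∑ l, θ (k, l) ^ 2 ≤ ‖θ‖ ^ 2 := by
    rw [EuclideanSpace.real_norm_sq_eq, Fintype.sum_prod_type]
    exact single_le_sum (f := fun j => ∑ l, θ (j, l) ^ 2)
      (fun j _ => sum_nonneg fun l _ => sq_nonneg _) (mem_univ k)
  refine abs_le_of_sq_le_sq ?_ (by positivity)
  calc (∑ l, θ (k, l) * x l) ^ 2 ≤ (∑ l, θ (k, l) ^ 2) * ∑ l, x l ^ 2 :=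
        sum_mul_sq_le_sq_mul_sq _ _ _
    _ ≤ ‖θ‖ ^ 2 * ‖x‖ ^ 2 := by
        rw [EuclideanSpace.real_norm_sq_eq x]
        exact mul_le_mul_of_nonneg_right hrow (sum_nonneg fun l _ => sq_nonneg _)
    _ = (‖θ‖ * ‖x‖) ^ 2 := (mul_pow _ _ _).symm

section Softmax

variable {ι : Type*} [Fintype ι]

/-- Multinomial logit probabilities with a reference class of score `0`, whose probability `z₀`
is `1 - ∑ k, softmaxRef s k`. -/
noncomputable def softmaxRef (s : ι → ℝ) (k : ι) : ℝ :=
  exp (s k) / (1 + ∑ j, exp (s j))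

variable {s : ι → ℝ} {B : ℝ}

theorem one_add_sum_exp_pos (s : ι → ℝ) : 0 < 1 + ∑ j, exp (s j) := by positivity

theorem one_sub_sum_softmaxRef (s : ι → ℝ) :
    1 - ∑ k, softmaxRef s k = (1 + ∑ j, exp (s j))⁻¹ := by
  have := one_add_sum_exp_pos s
  simp only [softmaxRef, ← sum_div]
  field_simp
  ring

theorem one_add_sum_exp_le (hs : ∀ k, |s k| ≤ B) :
    1 + ∑ j, exp (s j) ≤ 1 + Fintype.card ι * exp B := by
  have h := sum_le_sum fun j (_ : j ∈ univ) => exp_le_exp.mpr (le_of_abs_le (hs j))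
  rw [sum_const, card_univ, nsmul_eq_mul] at h
  linarith

theorem exp_neg_div_le_softmaxRef (hs : ∀ k, |s k| ≤ B) (k : ι) :
    exp (-B) / (1 + Fintype.card ι * exp B) ≤ softmaxRef s k :=
  div_le_div₀ (exp_pos _).le (exp_le_exp.mpr (neg_le_of_abs_le (hs k)))
    (one_add_sum_exp_pos s) (one_add_sum_exp_le hs)

theorem inv_le_one_sub_sum_softmaxRef (hs : ∀ k, |s k| ≤ B) :
    (1 + Fintype.card ι * exp B)⁻¹ ≤ 1 - ∑ k, softmaxRef s k := by
  rw [one_sub_sum_softmaxRef]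
  exact inv_anti₀ (one_add_sum_exp_pos s) (one_add_sum_exp_le hs)

end Softmax

section Covariance

variable {n : Type*} [Fintype n] [DecidableEq n]

theorem dotProduct_diagonal_sub_vecMulVec_mulVec (z v : n → ℝ) :
    v ⬝ᵥ (diagonal z - vecMulVec z z) *ᵥ v = ∑ i, z i * v i ^ 2 - (∑ i, z i * v i) ^ 2 := by
  rw [sub_mulVec, dotProduct_sub, vecMulVec_mulVec, dotProduct_smul]
  simp only [dotProduct, mulVec_diagonal, op_smul_eq_smul, smul_eq_mul]
  simp only [mul_comm (v _), mul_assoc, sq]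

omit [DecidableEq n] in
theorem sq_sum_mul_le_sum_mul_sum_mul_sq {z : n → ℝ} (hz : ∀ i, 0 ≤ z i) (v : n → ℝ) :
    (∑ i, z i * v i) ^ 2 ≤ (∑ i, z i) * ∑ i, z i * v i ^ 2 :=
  sum_sq_le_sum_mul_sum_of_sq_le_mul _ (fun i _ => hz i)
    (fun i _ => mul_nonneg (hz i) (sq_nonneg _)) fun i _ => (by ring : _ = _).le

theorem posSemidef_diagonal_sub_vecMulVec_sub_smul {z : n → ℝ} (hz : ∀ i, 0 ≤ z i) {c : ℝ}
    (hc : ∀ i, c ≤ (1 - ∑ j, z j) * z i) :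
    (diagonal z - vecMulVec z z - c • 1).PosSemidef := by
  refine posSemidef_iff_dotProduct_mulVec.mpr ⟨?_, fun v => ?_⟩
  · refine ((isHermitian_diagonal z).sub ?_).sub (isHermitian_one.smul (IsSelfAdjoint.all c))
    rw [IsHermitian, conjTranspose_eq_transpose_of_trivial, transpose_vecMulVec]
  have hcv : c * ∑ i, v i ^ 2 ≤ (1 - ∑ j, z j) * ∑ i, z i * v i ^ 2 := by
    rw [mul_sum, mul_sum]
    refine sum_le_sum fun i _ => ?_
    calc c * v i ^ 2 ≤ (1 - ∑ j, z j) * z i * v i ^ 2 :=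
          mul_le_mul_of_nonneg_right (hc i) (sq_nonneg _)
      _ = (1 - ∑ j, z j) * (z i * v i ^ 2) := mul_assoc _ _ _
  have hCS := sq_sum_mul_le_sum_mul_sum_mul_sq hz v
  rw [star_trivial, sub_mulVec, dotProduct_sub, dotProduct_diagonal_sub_vecMulVec_mulVec,
    smul_mulVec, one_mulVec, dotProduct_smul, smul_eq_mul]
  simp only [dotProduct, ← sq]
  rw [sub_mul, one_mul] at hcv
  linarith

end Covariance

theorem stmt16_general {K d : ℕ} (S X : ℝ)
    (x : EuclideanSpace ℝ (Fin d)) (hx : ‖x‖ ≤ X)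
    (θ : EuclideanSpace ℝ (Fin K × Fin d)) (hθ : ‖θ‖ ≤ S)
    (z : Fin K → ℝ)
    (hz : ∀ k, z k = Real.exp (∑ l, θ (k, l) * x l) /
      (1 + ∑ j, Real.exp (∑ l, θ (j, l) * x l)))
    (A : Matrix (Fin K) (Fin K) ℝ)
    (hA : ∀ i j, A i j = z i * ((if i = j then (1 : ℝ) else 0) - z j)) :
    (A - (Real.exp (S * X) * (1 + K * Real.exp (S * X)) ^ 2)⁻¹ •
      (1 : Matrix (Fin K) (Fin K) ℝ)).PosSemidef := by
  set s : Fin K → ℝ := fun k => ∑ l, θ (k, l) * x l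
  have hs : ∀ k, |s k| ≤ S * X := fun k =>
    (abs_sum_row_mul_le_norm_mul_norm θ x k).trans
      (mul_le_mul hθ hx (norm_nonneg _) ((norm_nonneg _).trans hθ))
  have hzs : z = softmaxRef s := funext hz
  have hzlb : ∀ k, exp (-(S * X)) / (1 + K * exp (S * X)) ≤ z k := by
    simpa only [hzs, Fintype.card_fin] using exp_neg_div_le_softmaxRef hs
  have hz0 : (1 + K * exp (S * X))⁻¹ ≤ 1 - ∑ k, z k := by
    simpa only [hzs, Fintype.card_fin] using inv_le_one_sub_sum_softmaxRef hs
  obtain rfl : A = diagonal z - vecMulVec z z := by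
    ext i j
    rw [hA, Matrix.sub_apply, diagonal_apply, vecMulVec_apply, mul_sub, mul_ite, mul_one, mul_zero]
  refine posSemidef_diagonal_sub_vecMulVec_sub_smul
    (fun k => hzs ▸ (div_pos (exp_pos _) (one_add_sum_exp_pos s)).le) fun k => ?_
  calc (exp (S * X) * (1 + K * exp (S * X)) ^ 2)⁻¹
      = (1 + K * exp (S * X))⁻¹ * (exp (-(S * X)) / (1 + K * exp (S * X))) := by
        rw [exp_neg]; field_simp
    _ ≤ _ := mul_le_mul hz0 (hzlb k) (by positivity)
        ((inv_pos.mpr (by positivity)).le.trans hz0)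

/-- `κ ≤ e^{SX}(1+Ke^{SX})²` where `1/κ = inf λ_min(A(x,θ))`: equivalently, for all
`x ∈ D` and `θ ∈ Θ`, `A(x,θ) ⪰ c • I` with `c = e^{-SX}/(1+Ke^{SX})² = 1/(e^{SX}(1+Ke^{SX})²)`. -/
theorem stmt16 {K d : ℕ} (S X : ℝ) (hS : 0 < S) (hX : 0 < X)
    (x : EuclideanSpace ℝ (Fin d)) (hx : ‖x‖ ≤ X)
    (θ : EuclideanSpace ℝ (Fin K × Fin d)) (hθ : ‖θ‖ ≤ S)
    (z : Fin K → ℝ)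
    (hz : ∀ k, z k = Real.exp (∑ l, θ (k, l) * x l) /
      (1 + ∑ j, Real.exp (∑ l, θ (j, l) * x l)))
    (A : Matrix (Fin K) (Fin K) ℝ)
    (hA : ∀ i j, A i j = z i * ((if i = j then (1 : ℝ) else 0) - z j)) :
    (A - (Real.exp (S * X) * (1 + K * Real.exp (S * X)) ^ 2)⁻¹ •
      (1 : Matrix (Fin K) (Fin K) ℝ)).PosSemidef :=
  stmt16_general S X x hx θ hθ z hz A hA
end

section
/- Let A_1 ∈ ℝ^{d×d} be symmetric positive definite, y_1, ..., y_n ∈ ℝ^d, and A_t = A_1 + Σ_{s=1}^{t-1} y_s y_s^T. Then Σ_{t=1}^n min(y_t^T A_t^{-1} y_t, 1) ≤ 2 log(det(A_{n+1}) / det(A_1)). -/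
/-!
By the matrix determinant lemma, `det A_{t+1} = det A_t * (1 + q_t)` with
`q_t = y_tᵀ A_t⁻¹ y_t ≥ 0`, so `log (det A_{n+1} / det A_1)` telescopes to `∑ log (1 + q_t)`.
Termwise, `min q 1 ≤ 2 q / (1 + q) ≤ 2 log (1 + q)`.
-/

open Matrix

namespace Matrix

variable {m : Type*} [Fintype m] [DecidableEq m]

theorem det_add_vecMulVec {α : Type*} [CommRing α] {A : Matrix m m α} (hA : IsUnit A.det)
    (u v : m → α) : (A + vecMulVec u v).det = A.det * (1 + v ⬝ᵥ A⁻¹ *ᵥ u) := by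
  rw [vecMulVec_eq Unit, det_add_replicateCol_mul_replicateRow hA, Matrix.mul_assoc,
    ← replicateCol_mulVec]
  congr 1
  simp [det_unique, replicateRow_mul_replicateCol_apply]

theorem PosDef.dotProduct_inv_mulVec_self_nonneg {A : Matrix m m ℝ} (hA : A.PosDef)
    (v : m → ℝ) : 0 ≤ v ⬝ᵥ A⁻¹ *ᵥ v := by
  simpa using hA.inv.posSemidef.dotProduct_mulVec_nonneg v

theorem PosDef.log_det_add_vecMulVec_self {A : Matrix m m ℝ} (hA : A.PosDef) (v : m → ℝ) :
    Real.log (A + vecMulVec v v).det = Real.log A.det + Real.log (1 + v ⬝ᵥ A⁻¹ *ᵥ v) := by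
  have hq := hA.dotProduct_inv_mulVec_self_nonneg v
  rw [det_add_vecMulVec (isUnit_iff_ne_zero.mpr hA.det_pos.ne'),
    Real.log_mul hA.det_pos.ne' (by positivity)]

end Matrix

theorem Real.min_one_le_two_mul_log_one_add {x : ℝ} (hx : 0 ≤ x) :
    min x 1 ≤ 2 * Real.log (1 + x) := by
  have hpos : 0 < 1 + x := by linarith
  have hlog : x / (1 + x) ≤ Real.log (1 + x) := by
    have := Real.one_sub_inv_le_log_of_pos hpos
    rwa [inv_eq_one_div, one_sub_div hpos.ne', add_sub_cancel_left] at this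
  have hmin : min x 1 ≤ 2 * (x / (1 + x)) := by
    rw [mul_div_assoc', le_div_iff₀ hpos]
    rcases le_total x 1 with h | h
    · rw [min_eq_left h]; nlinarith
    · rw [min_eq_right h]; linarith
  linarith

section EllipticPotential

variable {m : Type*} [Fintype m] {A : ℕ → Matrix m m ℝ} {y : ℕ → m → ℝ}

theorem posDef_of_posDef_zero_of_add_vecMulVec (h₀ : (A 0).PosDef)
    (hA : ∀ t, A (t + 1) = A t + vecMulVec (y t) (y t)) (t : ℕ) : (A t).PosDef := by
  induction t with
  | zero => exact h₀
  | succ t ih => simpa [hA] using ih.add_posSemidef (posSemidef_vecMulVec_self_star (y t))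

theorem sum_min_le_two_mul_log_det_div [DecidableEq m] (h₀ : (A 0).PosDef)
    (hA : ∀ t, A (t + 1) = A t + vecMulVec (y t) (y t)) (n : ℕ) :
    ∑ t ∈ Finset.range n, min (y t ⬝ᵥ (A t)⁻¹ *ᵥ y t) 1 ≤
      2 * Real.log ((A n).det / (A 0).det) := by
  have hPD := posDef_of_posDef_zero_of_add_vecMulVec h₀ hA
  rw [Real.log_div (hPD n).det_pos.ne' h₀.det_pos.ne',
    ← Finset.sum_range_sub fun t => Real.log (A t).det, Finset.mul_sum]
  refine Finset.sum_le_sum fun t _ => ?_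
  rw [hA, (hPD t).log_det_add_vecMulVec_self, add_sub_cancel_left]
  exact Real.min_one_le_two_mul_log_one_add ((hPD t).dotProduct_inv_mulVec_self_nonneg (y t))

end EllipticPotential

theorem stmt17 {d n : ℕ} (A₁ : Matrix (Fin d) (Fin d) ℝ) (h₁ : A₁.PosDef)
    (y : ℕ → Fin d → ℝ) (A : ℕ → Matrix (Fin d) (Fin d) ℝ)
    (hA : ∀ t, A t = A₁ + ∑ s ∈ Finset.range t, Matrix.vecMulVec (y s) (y s)) :
    ∑ t ∈ Finset.range n, min (y t ⬝ᵥ (A t)⁻¹.mulVec (y t)) 1 ≤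
      2 * Real.log ((A n).det / A₁.det) := by
  have hA₀ : A 0 = A₁ := by simp [hA]
  have hstep : ∀ t, A (t + 1) = A t + vecMulVec (y t) (y t) := fun t => by
    rw [hA, hA, Finset.sum_range_succ, add_assoc]
  rw [← hA₀] at h₁ ⊢
  exact sum_min_le_two_mul_log_det_div h₁ hstep n
end
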